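/- Let X₁, X₂, … be independent and identically distributed nonnegative real-valued random variables with finite mean μ := E[X₁], and let c₁ < μ be a real number. Then there exists a constant c₂ > 0 such that for every integer n ≥ 1, P(X₁ + X₂ + ⋯ + Xₙ ≤ c₁·n) ≤ exp(−c₂·n). -/

import Mathlib

open MeasureTheory ProbabilityTheory Filter Real

/-! Truncate the `Xᵢ` at a level `A` so large that `c₁` stays below the common mean `a` of the
truncated variables. These take values in `[0, A]`, so by Hoeffding's inequality their sum over
`n` indices falls below `c₁ n` with probability at most `exp (-2 (a - c₁)² n / A²)`, and it is
dominated by `X₁ + ⋯ + Xₙ`. -/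

section Truncation

variable {α : Type*} {m : MeasurableSpace α} {μ : Measure α} {f : α → ℝ} {A : ℝ} {x : α}

lemma truncation_le_self (hf : 0 ≤ f x) : truncation f A x ≤ f x :=
  (le_abs_self _).trans <| (abs_truncation_le_abs_self f A x).trans_eq (abs_of_nonneg hf)

lemma truncation_mem_Icc (hf : 0 ≤ f x) (hA : 0 ≤ A) : truncation f A x ∈ Set.Icc 0 A :=
  ⟨truncation_nonneg A hf, (le_abs_self _).trans <|
    (abs_truncation_le_bound f A x).trans_eq (abs_of_nonneg hA)⟩

lemma Measurable.truncation (hf : Measurable f) : Measurable (truncation f A) :=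
  (measurable_id.indicator measurableSet_Ioc).comp hf

lemma ProbabilityTheory.iIndepFun.truncation {ι : Type*} {X : ι → α → ℝ} (h : iIndepFun X μ) :
    iIndepFun (fun i ↦ truncation (X i) A) μ :=
  h.comp _ fun _ ↦ measurable_id.indicator measurableSet_Ioc

lemma exists_lt_integral_truncation (hf : Integrable f μ) {c : ℝ} (hc : c < ∫ x, f x ∂μ) :
    ∃ A, 0 < A ∧ c < ∫ x, truncation f A x ∂μ :=
  ((eventually_gt_atTop 0).and ((tendsto_integral_truncation hf).eventually
    (lt_mem_nhds hc))).exists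

end Truncation

lemma measureReal_sum_range_le_sum_integral_sub_le {Ω : Type*} {mΩ : MeasurableSpace Ω}
    {μ : Measure Ω} [IsProbabilityMeasure μ] {Y : ℕ → Ω → ℝ} (h_indep : iIndepFun Y μ)
    (h_meas : ∀ i, Measurable (Y i)) {a b : ℝ} (h_bound : ∀ i, ∀ᵐ ω ∂μ, Y i ω ∈ Set.Icc a b)
    (n : ℕ) {ε : ℝ} (hε : 0 ≤ ε) :
    μ.real {ω | ∑ i ∈ Finset.range n, Y i ω ≤ ∑ i ∈ Finset.range n, μ[Y i] - ε} ≤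
      exp (-2 * ε ^ 2 / (n * (b - a) ^ 2)) := by
  have h_indep' : iIndepFun (fun i ω ↦ μ[Y i] - Y i ω) μ :=
    h_indep.comp (fun i (x : ℝ) ↦ ∫ ω, Y i ω ∂μ - x) fun _ ↦ measurable_const.sub measurable_id
  have h_subG : ∀ i < n, HasSubgaussianMGF (fun ω ↦ μ[Y i] - Y i ω) ((‖b - a‖₊ / 2) ^ 2) μ :=
    fun i _ ↦ (hasSubgaussianMGF_of_mem_Icc (h_meas i).aemeasurable (h_bound i)).neg.congr
      (ae_of_all _ fun ω ↦ by simp)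
  have h_set : {ω | ∑ i ∈ Finset.range n, Y i ω ≤ ∑ i ∈ Finset.range n, μ[Y i] - ε} =
      {ω | ε ≤ ∑ i ∈ Finset.range n, (μ[Y i] - Y i ω)} := by
    ext ω
    simp only [Set.mem_ofPred_eq, Finset.sum_sub_distrib]
    constructor <;> intro h <;> linarith
  rw [h_set]
  refine (HasSubgaussianMGF.measure_sum_range_ge_le_of_iIndepFun h_indep' h_subG hε).trans_eq ?_
  congr 1
  push_cast
  rw [Real.norm_eq_abs, div_pow, sq_abs]
  generalize (b - a) ^ 2 = d
  ring

theorem iid_lower_tail_exponential_bound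
    {Ω : Type*} {mΩ : MeasurableSpace Ω} (P : Measure Ω) [IsProbabilityMeasure P]
    (X : ℕ → Ω → ℝ)
    (hmeas : ∀ i, Measurable (X i))
    (hindep : iIndepFun X P)
    (hident : ∀ i, IdentDistrib (X i) (X 0) P P)
    (hnonneg : ∀ i ω, 0 ≤ X i ω)
    (hint : Integrable (X 0) P)
    (c₁ : ℝ) (hc₁ : c₁ < ∫ ω, X 0 ω ∂P) :
    ∃ c₂ : ℝ, 0 < c₂ ∧ ∀ n : ℕ, 1 ≤ n →
      P {ω | ∑ i ∈ Finset.range n, X i ω ≤ c₁ * n} ≤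
        ENNReal.ofReal (Real.exp (-c₂ * n)) := by
  obtain ⟨A, hA, hc₁A⟩ := exists_lt_integral_truncation hint hc₁
  set a := ∫ ω, truncation (X 0) A ω ∂P
  have hgap : 0 < a - c₁ := sub_pos.2 hc₁A
  refine ⟨2 * (a - c₁) ^ 2 / A ^ 2, by positivity, fun n hn ↦ ?_⟩
  have h_mean : ∀ i, P[truncation (X i) A] = a := fun i ↦ (hident i).truncation.integral_eq
  have h_sub : {ω | ∑ i ∈ Finset.range n, X i ω ≤ c₁ * n} ⊆
      {ω | ∑ i ∈ Finset.range n, truncation (X i) A ω ≤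
        ∑ i ∈ Finset.range n, P[truncation (X i) A] - (a - c₁) * n} := by
    intro ω hω
    have h_le : ∑ i ∈ Finset.range n, truncation (X i) A ω ≤ ∑ i ∈ Finset.range n, X i ω :=
      Finset.sum_le_sum fun i _ ↦ truncation_le_self (hnonneg i ω)
    simp only [Set.mem_ofPred_eq, h_mean, Finset.sum_const, Finset.card_range,
      nsmul_eq_mul] at hω ⊢
    linarith
  have h_tail := measureReal_sum_range_le_sum_integral_sub_le hindep.truncation
    (fun i ↦ (hmeas i).truncation)
    (fun i ↦ ae_of_all _ fun ω ↦ truncation_mem_Icc (hnonneg i ω) hA.le) n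
    (mul_nonneg hgap.le n.cast_nonneg)
  rw [← ENNReal.ofReal_toReal (measure_ne_top P _)]
  refine ENNReal.ofReal_le_ofReal ((measureReal_mono h_sub).trans (h_tail.trans_eq ?_))
  have hn₀ : (n : ℝ) ≠ 0 := Nat.cast_ne_zero.2 (by omega)
  rw [sub_zero]
  field_simp
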